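/- Let f : ℝ^m → ℝ^m be differentiable, x̄ ∈ ℝ^m, A ∈ ℝ^{m×m}, and r* > 0. Suppose there exist Y, Z > 0 with ‖A f(x̄)‖ ≤ Y, sup_{x ∈ closedBall(x̄, r*)} ‖I − A·Df(x)‖ ≤ Z < 1, and 0 < Y/(1−Z) < r*. Then for every r ∈ [Y/(1−Z), r*] there exists a unique zero of f in the closed ball of radius r around x̄. -/

import Mathlib

/-! The map `g x = x - A (f x)` has derivative `I - A ∘ Df x`, so by the mean value inequality it
is a `Z`-contraction on `closedBall xbar r`, and `‖g xbar - xbar‖ ≤ Y ≤ (1 - Z) r` makes it map that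
ball into itself; Banach's fixed point theorem gives a unique fixed point there. Fixed points of `g`
are the zeros of `f` because `A` is injective: `A ∘ Df xbar` lies within `Z < 1` of the identity,
hence is invertible, so `A` is surjective and, in finite dimension, injective. -/

open Function Metric Set NNReal

theorem existsUnique_fixedPoint_of_lipschitzOnWith {α : Type*} [MetricSpace α] {g : α → α}
    {s : Set α} {K : ℝ≥0} (hs : IsComplete s) (hne : s.Nonempty) (hmaps : MapsTo g s s)
    (hK : K < 1) (hg : LipschitzOnWith K g s) : ∃! x, x ∈ s ∧ g x = x := by
  obtain ⟨x₀, hx₀⟩ := hne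
  have hcontr : ContractingWith K (hmaps.restrict g s s) :=
    ⟨hK, fun x y => hg x.2 y.2⟩
  obtain ⟨x, hxs, hfix, -⟩ := hcontr.exists_fixedPoint' hs hmaps hx₀ (edist_ne_top _ _)
  refine ⟨x, ⟨hxs, hfix.eq⟩, fun y ⟨hys, hyfix⟩ => ?_⟩
  have hdist : dist y x ≤ K * dist y x := by
    simpa only [hyfix, hfix.eq] using hg.dist_le_mul y hys x hxs
  have hK' : (K : ℝ) < 1 := hK
  exact dist_le_zero.mp (by nlinarith [dist_nonneg (x := y) (y := x)])

theorem LipschitzOnWith.mapsTo_closedBall_self {α : Type*} [PseudoMetricSpace α] {g : α → α}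
    {x : α} {r : ℝ} {K : ℝ≥0} (hg : LipschitzOnWith K g (closedBall x r))
    (hr : 0 ≤ r) (hx : dist (g x) x ≤ (1 - K) * r) : MapsTo g (closedBall x r) (closedBall x r) := by
  intro y hy
  rw [mem_closedBall] at hy ⊢
  calc dist (g y) x ≤ dist (g y) (g x) + dist (g x) x := dist_triangle _ _ _
    _ ≤ K * dist y x + (1 - K) * r := add_le_add (hg.dist_le_mul y hy x (mem_closedBall_self hr)) hx
    _ ≤ K * r + (1 - K) * r := by gcongr
    _ = r := by ring

section Newton

variable {E F : Type*} [NormedAddCommGroup E] [NormedSpace ℝ E] [NormedAddCommGroup F]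
  [NormedSpace ℝ F]

theorem Convex.lipschitzOnWith_sub_apply_comp {f : E → F} {f' : E → E →L[ℝ] F} {A : F →L[ℝ] E}
    {s : Set E} {K : ℝ≥0} (hs : Convex ℝ s) (hf : ∀ x ∈ s, HasFDerivWithinAt f (f' x) s x)
    (hbound : ∀ x ∈ s, ‖ContinuousLinearMap.id ℝ E - A.comp (f' x)‖ ≤ K) :
    LipschitzOnWith K (fun x => x - A (f x)) s :=
  hs.lipschitzOnWith_of_nnnorm_hasFDerivWithin_le
    (fun x hx => (hasFDerivWithinAt_id x s).sub (A.hasFDerivAt.comp_hasFDerivWithinAt x (hf x hx)))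
    hbound

theorem ContinuousLinearMap.injective_of_norm_id_sub_comp_lt_one [FiniteDimensional ℝ E]
    {A B : E →L[ℝ] E} (h : ‖ContinuousLinearMap.id ℝ E - A.comp B‖ < 1) : Injective A := by
  set u := Units.oneSub _ h
  have hsurj : Surjective A := fun y =>
    ⟨B (u.inv y), by simpa [u] using congr($(u.mul_inv) y)⟩
  exact LinearMap.injective_iff_surjective (f := (A : E →ₗ[ℝ] E)) |>.mpr hsurj

end Newton

theorem validated_zero_general {m : ℕ}
    (f : EuclideanSpace ℝ (Fin m) → EuclideanSpace ℝ (Fin m))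
    (f' : EuclideanSpace ℝ (Fin m) → (EuclideanSpace ℝ (Fin m) →L[ℝ] EuclideanSpace ℝ (Fin m)))
    (hdiff : ∀ x, HasFDerivAt f (f' x) x)
    (xbar : EuclideanSpace ℝ (Fin m))
    (A : EuclideanSpace ℝ (Fin m) →L[ℝ] EuclideanSpace ℝ (Fin m))
    (rstar Y Z : ℝ)
    (hYbound : ‖A (f xbar)‖ ≤ Y)
    (hZbound : ∀ x ∈ Metric.closedBall xbar rstar,
      ‖(ContinuousLinearMap.id ℝ (EuclideanSpace ℝ (Fin m))) - A.comp (f' x)‖ ≤ Z)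
    (hZlt : Z < 1) :
    ∀ r ∈ Set.Icc (Y / (1 - Z)) rstar,
      ∃! x, x ∈ Metric.closedBall xbar r ∧ f x = 0 := by
  rintro r ⟨hYr, hr⟩
  have hYr' : Y ≤ (1 - Z) * r := by rwa [div_le_iff₀' (by linarith)] at hYr
  have hr0 : 0 ≤ r := (div_nonneg ((norm_nonneg _).trans hYbound) (by linarith)).trans hYr
  have hball : closedBall xbar r ⊆ closedBall xbar rstar := closedBall_subset_closedBall hr
  have hxbar : xbar ∈ closedBall xbar rstar := hball (mem_closedBall_self hr0)
  lift Z to ℝ≥0 using (norm_nonneg _).trans (hZbound xbar hxbar)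
  have hA : Injective A :=
    ContinuousLinearMap.injective_of_norm_id_sub_comp_lt_one ((hZbound xbar hxbar).trans_lt hZlt)
  have hlip : LipschitzOnWith Z (fun x => x - A (f x)) (closedBall xbar r) :=
    (convex_closedBall xbar r).lipschitzOnWith_sub_apply_comp
      (fun x _ => (hdiff x).hasFDerivWithinAt) (fun x hx => hZbound x (hball hx))
  have hmaps := hlip.mapsTo_closedBall_self hr0 <| by
    simpa only [dist_eq_norm, sub_sub_cancel_left, norm_neg] using hYbound.trans hYr'
  refine (existsUnique_congr fun x => and_congr_right' ?_).mp
    (existsUnique_fixedPoint_of_lipschitzOnWith isClosed_closedBall.isComplete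
      ⟨xbar, mem_closedBall_self hr0⟩ hmaps (by exact_mod_cast hZlt) hlip)
  exact sub_eq_self.trans (map_eq_zero_iff A hA)

/-- **Validated zero theorem.** If `‖A f(xbar)‖ ≤ Y`, `‖I − A·Df(x)‖ ≤ Z < 1` on the
closed ball of radius `r*`, and `0 < Y/(1−Z) < r*`, then for every
`r ∈ [Y/(1−Z), r*]` there is a unique zero of `f` in the closed ball of radius `r`. -/
theorem validated_zero {m : ℕ}
    (f : EuclideanSpace ℝ (Fin m) → EuclideanSpace ℝ (Fin m))
    (f' : EuclideanSpace ℝ (Fin m) → (EuclideanSpace ℝ (Fin m) →L[ℝ] EuclideanSpace ℝ (Fin m)))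
    (hdiff : ∀ x, HasFDerivAt f (f' x) x)
    (xbar : EuclideanSpace ℝ (Fin m))
    (A : EuclideanSpace ℝ (Fin m) →L[ℝ] EuclideanSpace ℝ (Fin m))
    (rstar Y Z : ℝ) (hrstar : 0 < rstar) (hY : 0 < Y) (hZ : 0 < Z)
    (hYbound : ‖A (f xbar)‖ ≤ Y)
    (hZbound : ∀ x ∈ Metric.closedBall xbar rstar,
      ‖(ContinuousLinearMap.id ℝ (EuclideanSpace ℝ (Fin m))) - A.comp (f' x)‖ ≤ Z)
    (hZlt : Z < 1)
    (hmin_pos : 0 < Y / (1 - Z)) (hmin_lt : Y / (1 - Z) < rstar) :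
    ∀ r ∈ Set.Icc (Y / (1 - Z)) rstar,
      ∃! x, x ∈ Metric.closedBall xbar r ∧ f x = 0 :=
  validated_zero_general f f' hdiff xbar A rstar Y Z hYbound hZbound hZlt
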